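/- Let 𝒢 be a finite groupoid and A a unital 𝒢-graded algebra over a field k, regarded as a left k𝒢*-module algebra via v_g · a = a_g. Let X = {v_g : g ∈ 𝒢} be the dual basis of k𝒢*, which is a split 𝒢-set via α=(X_g,α_g) with X_g = {v_h : r(h)=r(g)} and α_g(v_h) = v_{gh}. Then the map ψ : A # k𝒢* → A #_α^𝒢 X given by ψ(Σ_{d(g)=r(h)} a_g # v_h) = Σ_{d(g)=r(h)} a_g δ_{v_h} is an isomorphism of algebras, where A # k𝒢* = ⊕_{d(g)=r(h)} A_g ⊗ v_h is the weak smash product algebra. -/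

import Mathlib

open scoped Classical

noncomputable section

universe u v w

/-- A groupoid, presented as a set of morphisms with partially defined
composition.  `s g` is the domain (source) identity `d(g)`, `t g` the range
(target) identity `r(g)`; `mul g h` is the composite `gh`, meaningful when
`s g = t h`. -/
structure Gpd (G : Type u) where
  s : G → G
  t : G → G
  inv : G → G
  mul : G → G → G
  s_s : ∀ g, s (s g) = s g
  t_s : ∀ g, t (s g) = s g
  s_t : ∀ g, s (t g) = t g
  t_t : ∀ g, t (t g) = t g
  s_mul : ∀ g h, s g = t h → s (mul g h) = s h
  t_mul : ∀ g h, s g = t h → t (mul g h) = t g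
  mul_assoc : ∀ g h l, s g = t h → s h = t l → mul (mul g h) l = mul g (mul h l)
  mul_src : ∀ g, mul g (s g) = g
  tgt_mul : ∀ g, mul (t g) g = g
  s_inv : ∀ g, s (inv g) = t g
  t_inv : ∀ g, t (inv g) = s g
  inv_mul : ∀ g, mul (inv g) g = s g
  mul_inv : ∀ g, mul g (inv g) = t g

namespace Gpd

variable {G : Type u}

/-- `e` is an object (identity) of the groupoid. -/
def obj (𝒢 : Gpd G) (e : G) : Prop := 𝒢.s e = e

/-- The set `𝒢₀` of objects of the groupoid. -/
def Objs (𝒢 : Gpd G) : Set G := {e | 𝒢.obj e}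

end Gpd

/-- An action `α = (X_g, α_g)` of a groupoid `𝒢` on a set `X`:
`car g` is the subset `X_g` and `act g` restricts to the bijection
`α_g : X_{g⁻¹} → X_g`. -/
structure GpdSetAction {G : Type u} (𝒢 : Gpd G) (X : Type v) where
  car : G → Set X
  act : G → X → X
  car_t : ∀ g, car g = car (𝒢.t g)
  bijOn : ∀ g, Set.BijOn (act g) (car (𝒢.inv g)) (car g)
  act_id : ∀ e, 𝒢.obj e → ∀ x ∈ car e, act e x = x
  act_mul : ∀ g h, 𝒢.s g = 𝒢.t h → ∀ x ∈ car (𝒢.inv h),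
    act g (act h x) = act (𝒢.mul g h) x

/-- `X` is a split `𝒢`-set: `X` is the disjoint union of the `X_e`, `e ∈ 𝒢₀`. -/
def GpdSetAction.Split {G : Type u} {𝒢 : Gpd G} {X : Type v} (α : GpdSetAction 𝒢 X) : Prop :=
  ∀ x : X, ∃! e : G, 𝒢.obj e ∧ x ∈ α.car e

/-- The action is fully faithful: if `α_g` fixes some `x ∈ X_g ∩ X_{g⁻¹}`
then `g` is an identity. -/
def GpdSetAction.FullyFaithful {G : Type u} {𝒢 : Gpd G} {X : Type v}
    (α : GpdSetAction 𝒢 X) : Prop :=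
  ∀ g x, x ∈ α.car g ∩ α.car (𝒢.inv g) → α.act g x = x → 𝒢.obj g

/-- A `𝒢`-grading of the `k`-algebra `A`:  `A = ⊕_{g ∈ 𝒢} A_g` with
`A_g A_h ⊆ A_{gh}` for composable `g, h` and `A_g A_h = 0` otherwise. -/
structure GpdGrading {G : Type u} (𝒢 : Gpd G) (k : Type v) (A : Type w)
    [Field k] [Ring A] [Algebra k A] where
  comp : G → Submodule k A
  internal : DirectSum.IsInternal comp
  mul_mem : ∀ g h, 𝒢.s g = 𝒢.t h → ∀ a ∈ comp g, ∀ b ∈ comp h, a * b ∈ comp (𝒢.mul g h)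
  mul_eq_zero : ∀ g h, 𝒢.s g ≠ 𝒢.t h → ∀ a ∈ comp g, ∀ b ∈ comp h, a * b = 0

/-- The homogeneous component of degree `g` of `a ∈ A`. -/
noncomputable def GpdGrading.proj {G : Type u} {𝒢 : Gpd G} {k : Type v} {A : Type w}
    [Field k] [Ring A] [Algebra k A] (𝒜 : GpdGrading 𝒢 k A) (g : G) (a : A) : A :=
  ((Equiv.ofBijective _ 𝒜.internal).symm a g : A)

/-- `one : G → A` is a family of local units for the grading: each `one e`
(`e ∈ 𝒢₀`) is an identity element of `A_e` and `1_A = Σ_{e ∈ 𝒢₀} 1_e`. -/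
def IsIdFamily {G : Type u} {𝒢 : Gpd G} {k : Type v} {A : Type w}
    [Field k] [Ring A] [Algebra k A] (𝒜 : GpdGrading 𝒢 k A) (one : G → A) : Prop :=
  (∀ e, 𝒢.obj e → one e ∈ 𝒜.comp e ∧ ∀ a ∈ 𝒜.comp e, one e * a = a ∧ a * one e = a) ∧
  (1 : A) = ∑ᶠ e ∈ 𝒢.Objs, one e

/-- The multiplication of the smash product `A #_α^𝒢 X`, defined on the
ambient space of formal sums `Σ a_{(g,x)} δ_{(g,x)}`:
`(a δ_{(g,x)}) (b δ_{(h,y)}) = (a b) δ_{(gh, y)}` when `d(g) = r(h)` and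
`α_h(y) = x`, and `0` otherwise. -/
noncomputable def smashMul {G : Type u} {𝒢 : Gpd G} {X : Type v} {A : Type w} [Ring A]
    (α : GpdSetAction 𝒢 X) (f₁ f₂ : (G × X) →₀ A) : (G × X) →₀ A :=
  f₁.sum fun p a => f₂.sum fun q b =>
    if 𝒢.s p.1 = 𝒢.t q.1 ∧ α.act q.1 q.2 = p.2
    then Finsupp.single (𝒢.mul p.1 q.1, q.2) (a * b) else 0

/-- The underlying set of the smash product `A #_α^𝒢 X = ⊕_{g} ⊕_{x ∈ X_{d(g)}} A_g δ_x`: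
those formal sums whose `(g,x)`-coefficient lies in `A_g`, supported on pairs
with `x ∈ X_{d(g)}`. -/
def smashSet {G : Type u} {𝒢 : Gpd G} {X : Type v} {k : Type*} {A : Type w}
    [Field k] [Ring A] [Algebra k A]
    (α : GpdSetAction 𝒢 X) (𝒜 : GpdGrading 𝒢 k A) : Set ((G × X) →₀ A) :=
  {f | ∀ p : G × X, f p ∈ 𝒜.comp p.1 ∧ (f p ≠ 0 → p.2 ∈ α.car (𝒢.s p.1))}

/-- The identity element `Σ_{e ∈ 𝒢₀} Σ_{x ∈ X_e} 1_e δ_x` of the smash product. -/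
noncomputable def smashOne {G : Type u} {𝒢 : Gpd G} {X : Type v} {A : Type w} [Ring A]
    (α : GpdSetAction 𝒢 X) (one : G → A) : (G × X) →₀ A :=
  ∑ᶠ e ∈ 𝒢.Objs, ∑ᶠ x ∈ α.car e, Finsupp.single ((e, x) : G × X) (one e)

/-- The underlying set of the weak smash product
`A # k𝒢* = ⊕_{d(g) = r(h)} A_g ⊗ v_h`:  an element is stored as the finitely
supported function `F : 𝒢 → A` sending `h` to the coefficient
`Σ_g a_g ∈ ⊕_{d(g) = r(h)} A_g` of `v_h`. -/
def weakSmashSet {G : Type u} {𝒢 : Gpd G} {k : Type*} {A : Type w}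
    [Field k] [Ring A] [Algebra k A] (𝒜 : GpdGrading 𝒢 k A) : Set (G →₀ A) :=
  {F | ∀ h g, 𝒜.proj g (F h) ≠ 0 → 𝒢.s g = 𝒢.t h}

/-- The multiplication of the weak smash product `A # k𝒢*`, induced by
`(a # u)(b # w) = a (u₁ · b) # u₂ w` for the weak Hopf algebra `k𝒢*`: on the
basis, `(a # v_h)(b # v_l) = a · (v_{h l⁻¹} · b) # v_l` if `d(h) = d(l)` and
`0` otherwise, where `v_m · b = b_m` is the `m`-homogeneous component. -/
noncomputable def weakSmashMul {G : Type u} {𝒢 : Gpd G} {k : Type*} {A : Type w}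
    [Field k] [Ring A] [Algebra k A] (𝒜 : GpdGrading 𝒢 k A)
    (F₁ F₂ : G →₀ A) : G →₀ A :=
  F₂.sum fun l b => F₁.sum fun h a =>
    if 𝒢.s h = 𝒢.s l then Finsupp.single l (a * 𝒜.proj (𝒢.mul h (𝒢.inv l)) b) else 0

/-- The map `ψ : A # k𝒢* → A #_α^𝒢 X`, `ψ(Σ a_g # v_h) = Σ a_g δ_{v_h}`,
where `X = {v_g : g ∈ 𝒢}` is identified with `𝒢` via `v_g ↦ g`. -/
noncomputable def weakToSmash {G : Type u} {𝒢 : Gpd G} {k : Type*} {A : Type w}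
    [Field k] [Ring A] [Algebra k A] (𝒜 : GpdGrading 𝒢 k A)
    (F : G →₀ A) : (G × G) →₀ A :=
  F.sum fun h a => ∑ᶠ g : G, Finsupp.single ((g, h) : G × G) (𝒜.proj g a)


/-!
`ψ` sends `F` to the family `(g, h) ↦ (F h)_g` of homogeneous components, so it is additive,
`k`-linear and bijective because `A = ⊕_g A_g`; the support conditions `d(g) = r(h)` on both
sides match because `X_{d(g)} = {v_h : r(h) = d(g)}`.

Both products are biadditive, and the weak smash product is additively generated by the
elements `a_g # v_h` with `a_g ∈ A_g` and `d(g) = r(h)`, so multiplicativity reduces to two such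
generators `a_g # v_h` and `b_m # v_l`. Their product is `a_g b_m # v_l` if `d(h) = d(l)` and
`m = h l⁻¹`, and `0` otherwise; in the groupoid this condition says `α_m(v_l) = v_{ml} = v_h`,
which is exactly when `(a_g δ_{v_h}) (b_m δ_{v_l}) = a_g b_m δ_{v_l}` rather than `0`.
-/

namespace Gpd

variable {G : Type u} (𝒢 : Gpd G) {g h l : G}

theorem mul_inv_mul_cancel (hgl : 𝒢.s g = 𝒢.s l) : 𝒢.mul (𝒢.mul g (𝒢.inv l)) l = g := by
  rw [𝒢.mul_assoc g (𝒢.inv l) l (by rw [𝒢.t_inv, hgl]) (𝒢.s_inv l), 𝒢.inv_mul, ← hgl,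
    𝒢.mul_src]

theorem mul_mul_inv_cancel (hgl : 𝒢.s g = 𝒢.t l) : 𝒢.mul (𝒢.mul g l) (𝒢.inv l) = g := by
  rw [𝒢.mul_assoc g l (𝒢.inv l) hgl (𝒢.t_inv l).symm, 𝒢.mul_inv, ← hgl, 𝒢.mul_src]

theorem mul_eq_iff_mul_inv_eq (hgl : 𝒢.s g = 𝒢.t l) :
    𝒢.mul g l = h ↔ 𝒢.s h = 𝒢.s l ∧ 𝒢.mul h (𝒢.inv l) = g := by
  constructor
  · rintro rfl
    exact ⟨𝒢.s_mul g l hgl, 𝒢.mul_mul_inv_cancel hgl⟩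
  · rintro ⟨hhl, rfl⟩
    exact 𝒢.mul_inv_mul_cancel hhl

end Gpd

namespace GpdGrading

variable {G : Type u} {𝒢 : Gpd G} {k : Type v} {A : Type w} [Field k] [Ring A] [Algebra k A]
  (𝒜 : GpdGrading 𝒢 k A)

instance : DirectSum.Decomposition 𝒜.comp := 𝒜.internal.chooseDecomposition

theorem proj_eq_decompose (g : G) (a : A) :
    𝒜.proj g a = DirectSum.decompose 𝒜.comp a g := rfl

def projLinearMap (g : G) : A →ₗ[k] A :=
  (𝒜.comp g).subtype ∘ₗ DFinsupp.lapply g ∘ₗ (DirectSum.decomposeLinearEquiv 𝒜.comp).toLinearMap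

@[simp]
theorem proj_zero (g : G) : 𝒜.proj g 0 = 0 := map_zero (𝒜.projLinearMap g)

@[simp]
theorem proj_add (g : G) (a b : A) : 𝒜.proj g (a + b) = 𝒜.proj g a + 𝒜.proj g b :=
  map_add (𝒜.projLinearMap g) a b

@[simp]
theorem proj_smul (g : G) (c : k) (a : A) : 𝒜.proj g (c • a) = c • 𝒜.proj g a :=
  map_smul (𝒜.projLinearMap g) c a

@[simp]
theorem proj_sum {ι : Type*} (g : G) (s : Finset ι) (f : ι → A) :
    𝒜.proj g (∑ i ∈ s, f i) = ∑ i ∈ s, 𝒜.proj g (f i) :=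
  map_sum (𝒜.projLinearMap g) f s

theorem proj_mem (g : G) (a : A) : 𝒜.proj g a ∈ 𝒜.comp g :=
  (DirectSum.decompose 𝒜.comp a g).2

theorem proj_of_mem {g : G} {a : A} (ha : a ∈ 𝒜.comp g) (p : G) :
    𝒜.proj p a = if p = g then a else 0 := by
  rw [proj_eq_decompose]
  split_ifs with hpg
  · subst hpg
    exact DirectSum.decompose_of_mem_same 𝒜.comp ha
  · exact DirectSum.decompose_of_mem_ne 𝒜.comp ha (Ne.symm hpg)

theorem sum_proj [Fintype G] (a : A) : ∑ g, 𝒜.proj g a = a := by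
  conv_rhs => rw [← (DirectSum.decompose 𝒜.comp).symm_apply_apply a,
    ← DirectSum.sum_univ_of (DirectSum.decompose 𝒜.comp a), DirectSum.decompose_symm_sum]
  simp only [DirectSum.decompose_symm_of, proj_eq_decompose]

end GpdGrading

section SmashProduct

variable {G : Type u} {𝒢 : Gpd G} {X : Type v} {A : Type w} [Ring A] (α : GpdSetAction 𝒢 X)

theorem smashMul_add_left (f₁ f₁' f₂ : (G × X) →₀ A) :
    smashMul α (f₁ + f₁') f₂ = smashMul α f₁ f₂ + smashMul α f₁' f₂ := by
  refine Finsupp.sum_add_index' (fun _ => by simp) fun p a a' => ?_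
  rw [← Finsupp.sum_add]
  congr 1
  funext q b
  split_ifs <;> simp [add_mul]

theorem smashMul_add_right (f₁ f₂ f₂' : (G × X) →₀ A) :
    smashMul α f₁ (f₂ + f₂') = smashMul α f₁ f₂ + smashMul α f₁ f₂' := by
  simp only [smashMul, ← Finsupp.sum_add]
  congr 1
  funext p a
  refine Finsupp.sum_add_index' (fun _ => by simp) fun q b b' => ?_
  split_ifs <;> simp [mul_add]

theorem smashMul_single_single (p q : G × X) (a b : A) :
    smashMul α (Finsupp.single p a) (Finsupp.single q b) =
      if 𝒢.s p.1 = 𝒢.t q.1 ∧ α.act q.1 q.2 = p.2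
      then Finsupp.single (𝒢.mul p.1 q.1, q.2) (a * b) else 0 := by
  simp [smashMul, Finsupp.sum_single_index]

end SmashProduct

section WeakSmashProduct

variable {G : Type u} {𝒢 : Gpd G} {k : Type v} {A : Type w} [Field k] [Ring A] [Algebra k A]
  (𝒜 : GpdGrading 𝒢 k A)

theorem weakSmashMul_add_left (F₁ F₁' F₂ : G →₀ A) :
    weakSmashMul 𝒜 (F₁ + F₁') F₂ = weakSmashMul 𝒜 F₁ F₂ + weakSmashMul 𝒜 F₁' F₂ := by
  simp only [weakSmashMul, ← Finsupp.sum_add]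
  congr 1
  funext l b
  refine Finsupp.sum_add_index' (fun _ => by simp) fun h a a' => ?_
  split_ifs <;> simp [add_mul]

theorem weakSmashMul_add_right (F₁ F₂ F₂' : G →₀ A) :
    weakSmashMul 𝒜 F₁ (F₂ + F₂') = weakSmashMul 𝒜 F₁ F₂ + weakSmashMul 𝒜 F₁ F₂' := by
  refine Finsupp.sum_add_index' (fun _ => by simp) fun l b b' => ?_
  rw [← Finsupp.sum_add]
  congr 1
  funext h a
  split_ifs <;> simp [mul_add]

theorem weakSmashMul_single_single (h l : G) (a b : A) :
    weakSmashMul 𝒜 (Finsupp.single h a) (Finsupp.single l b) =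
      if 𝒢.s h = 𝒢.s l then Finsupp.single l (a * 𝒜.proj (𝒢.mul h (𝒢.inv l)) b) else 0 := by
  simp [weakSmashMul, Finsupp.sum_single_index]

@[simp]
theorem weakToSmash_zero : weakToSmash 𝒜 0 = 0 :=
  Finsupp.sum_zero_index

theorem weakToSmash_single {g : G} {a : A} (ha : a ∈ 𝒜.comp g) (h : G) :
    weakToSmash 𝒜 (Finsupp.single h a) = Finsupp.single (g, h) a := by
  rw [weakToSmash, Finsupp.sum_single_index (by simp), finsum_eq_single _ g]
  · rw [𝒜.proj_of_mem ha, if_pos rfl]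
  · intro p hpg
    rw [𝒜.proj_of_mem ha, if_neg hpg, Finsupp.single_zero]

def weakSmashGenerators : Set (G →₀ A) :=
  {F | ∃ g h, 𝒢.s g = 𝒢.t h ∧ ∃ a ∈ 𝒜.comp g, F = Finsupp.single h a}

theorem weakToSmash_weakSmashMul_of_mem_generators (α : GpdSetAction 𝒢 G)
    (hα₁ : ∀ g, α.car g = {h | 𝒢.t h = 𝒢.t g})
    (hα₂ : ∀ g, ∀ h ∈ α.car (𝒢.inv g), α.act g h = 𝒢.mul g h)
    {F₁ F₂ : G →₀ A} (hF₁ : F₁ ∈ weakSmashGenerators 𝒜) (hF₂ : F₂ ∈ weakSmashGenerators 𝒜) :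
    weakToSmash 𝒜 (weakSmashMul 𝒜 F₁ F₂) = smashMul α (weakToSmash 𝒜 F₁) (weakToSmash 𝒜 F₂) := by
  obtain ⟨g, h, hgh, a, ha, rfl⟩ := hF₁
  obtain ⟨m, l, hml, b, hb, rfl⟩ := hF₂
  have hact : α.act m l = 𝒢.mul m l :=
    hα₂ m l (by rw [hα₁]; exact hml.symm.trans (𝒢.t_inv m).symm)
  rw [weakSmashMul_single_single, weakToSmash_single 𝒜 ha, weakToSmash_single 𝒜 hb,
    smashMul_single_single, hact, 𝒢.mul_eq_iff_mul_inv_eq hml, 𝒜.proj_of_mem hb]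
  by_cases hc : 𝒢.s h = 𝒢.s l ∧ 𝒢.mul h (𝒢.inv l) = m
  · obtain ⟨hhl, rfl⟩ := hc
    have hgm : 𝒢.s g = 𝒢.t (𝒢.mul h (𝒢.inv l)) := by
      rw [𝒢.t_mul h (𝒢.inv l) (by rw [𝒢.t_inv, hhl])]
      exact hgh
    rw [if_pos hhl, if_pos rfl, if_pos ⟨hgm, hhl, rfl⟩,
      weakToSmash_single 𝒜 (𝒜.mul_mem _ _ hgm a ha b hb)]
  · have hc' : ¬(𝒢.s g = 𝒢.t m ∧ 𝒢.s h = 𝒢.s l ∧ 𝒢.mul h (𝒢.inv l) = m) :=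
      fun hc' => hc hc'.2
    rw [if_neg hc']
    by_cases hhl : 𝒢.s h = 𝒢.s l
    · have hm : 𝒢.mul h (𝒢.inv l) ≠ m := fun hm => hc ⟨hhl, hm⟩
      simp [hhl, hm]
    · simp [hhl]

variable [Fintype G]

theorem weakToSmash_apply (F : G →₀ A) (p q : G) :
    weakToSmash 𝒜 F (p, q) = 𝒜.proj p (F q) := by
  simp [weakToSmash, finsum_eq_sum_of_fintype, Finsupp.sum_apply, Finsupp.finsetSum_apply,
    Finsupp.single_apply, ite_and, Finsupp.sum_ite_eq']
  intro hq
  rw [hq, 𝒜.proj_zero]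

theorem weakToSmash_add (F₁ F₂ : G →₀ A) :
    weakToSmash 𝒜 (F₁ + F₂) = weakToSmash 𝒜 F₁ + weakToSmash 𝒜 F₂ := by
  ext ⟨p, q⟩
  simp [weakToSmash_apply]

theorem weakToSmash_smul (c : k) (F : G →₀ A) :
    weakToSmash 𝒜 (c • F) = c • weakToSmash 𝒜 F := by
  ext ⟨p, q⟩
  simp [weakToSmash_apply]

theorem weakToSmash_injective : Function.Injective (weakToSmash 𝒜) := by
  intro F₁ F₂ hF
  ext q
  rw [← 𝒜.sum_proj (F₁ q), ← 𝒜.sum_proj (F₂ q)]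
  simp only [← weakToSmash_apply, hF]

theorem weakToSmash_mapsTo (α : GpdSetAction 𝒢 G) (hα₁ : ∀ g, α.car g = {h | 𝒢.t h = 𝒢.t g}) :
    Set.MapsTo (weakToSmash 𝒜) (weakSmashSet 𝒜) (smashSet α 𝒜) := by
  rintro F hF ⟨p, q⟩
  rw [weakToSmash_apply]
  refine ⟨𝒜.proj_mem p (F q), fun hne => ?_⟩
  rw [hα₁, 𝒢.t_s]
  exact (hF q p hne).symm

theorem weakToSmash_surjOn (α : GpdSetAction 𝒢 G) (hα₁ : ∀ g, α.car g = {h | 𝒢.t h = 𝒢.t g}) :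
    Set.SurjOn (weakToSmash 𝒜) (weakSmashSet 𝒜) (smashSet α 𝒜) := by
  intro f hf
  let F : G →₀ A := Finsupp.equivFunOnFinite.symm fun q => ∑ p, f (p, q)
  have hproj : ∀ g q, 𝒜.proj g (F q) = f (g, q) := fun g q => by
    simp [F, 𝒜.proj_of_mem (hf (_, q)).1]
  refine ⟨F, fun h g hne => ?_, Finsupp.ext fun ⟨p, q⟩ => by rw [weakToSmash_apply, hproj]⟩
  have hmem := (hf (g, h)).2 (hproj g h ▸ hne)
  rw [hα₁, 𝒢.t_s] at hmem
  exact hmem.symm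

theorem weakSmashSet_subset_closure :
    weakSmashSet 𝒜 ⊆ AddSubmonoid.closure (weakSmashGenerators 𝒜) := by
  intro F hF
  have hF_eq : F = ∑ h, ∑ g, Finsupp.single h (𝒜.proj g (F h)) := by
    conv_lhs => rw [← Finsupp.univ_sum_single F]
    simp only [← Finsupp.single_finsetSum, 𝒜.sum_proj]
  rw [hF_eq]
  refine AddSubmonoid.sum_mem _ fun h _ => AddSubmonoid.sum_mem _ fun g _ => ?_
  by_cases hz : 𝒜.proj g (F h) = 0
  · rw [hz, Finsupp.single_zero]
    exact zero_mem _
  · exact AddSubmonoid.subset_closure ⟨g, h, hF h g hz, _, 𝒜.proj_mem g (F h), rfl⟩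

theorem weakToSmash_weakSmashMul_of_mem_closure (α : GpdSetAction 𝒢 G)
    (hα₁ : ∀ g, α.car g = {h | 𝒢.t h = 𝒢.t g})
    (hα₂ : ∀ g, ∀ h ∈ α.car (𝒢.inv g), α.act g h = 𝒢.mul g h) {F₁ F₂ : G →₀ A}
    (hF₁ : F₁ ∈ AddSubmonoid.closure (weakSmashGenerators 𝒜))
    (hF₂ : F₂ ∈ AddSubmonoid.closure (weakSmashGenerators 𝒜)) :
    weakToSmash 𝒜 (weakSmashMul 𝒜 F₁ F₂) = smashMul α (weakToSmash 𝒜 F₁) (weakToSmash 𝒜 F₂) := by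
  induction hF₁, hF₂ using AddSubmonoid.closure_induction₂ with
  | mem F₁ F₂ hF₁ hF₂ => exact weakToSmash_weakSmashMul_of_mem_generators 𝒜 α hα₁ hα₂ hF₁ hF₂
  | zero_left => simp [weakSmashMul, smashMul]
  | zero_right => simp [weakSmashMul, smashMul]
  | add_left F₁ F₁' F₂ _ _ _ h h' =>
    rw [weakSmashMul_add_left, weakToSmash_add, weakToSmash_add, smashMul_add_left, h, h']
  | add_right F₂ F₂' F₁ _ _ _ h h' =>
    rw [weakSmashMul_add_right, weakToSmash_add, weakToSmash_add, smashMul_add_right, h, h']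

end WeakSmashProduct

/-- Let `𝒢` be a finite groupoid, `A` a unital `𝒢`-graded
algebra over `k` (i.e. a left `k𝒢*`-module algebra via `v_g · a = a_g`) and
`X = {v_g : g ∈ 𝒢}` the dual basis, a split `𝒢`-set via
`X_g = {v_h : r(h) = r(g)}` and `α_g(v_h) = v_{gh}`.  Then
`ψ : A # k𝒢* → A #_α^𝒢 X`, `ψ(Σ_{d(g)=r(h)} a_g # v_h) = Σ a_g δ_{v_h}`, is
an isomorphism of algebras. -/
theorem weak_smash_product_iso
    {G : Type u} (𝒢 : Gpd G) [Finite G]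
    (k : Type*) (A : Type w) [Field k] [Ring A] [Algebra k A]
    (𝒜 : GpdGrading 𝒢 k A)
    -- `α` is the action of `𝒢` on `X = {v_g : g ∈ 𝒢}` by `α_g(v_h) = v_{gh}`
    (α : GpdSetAction 𝒢 G)
    (hα₁ : ∀ g, α.car g = {h | 𝒢.t h = 𝒢.t g})
    (hα₂ : ∀ g, ∀ h ∈ α.car (𝒢.inv g), α.act g h = 𝒢.mul g h) :
    -- ψ is a bijection from `A # k𝒢*` onto `A #_α^𝒢 X`
    Set.BijOn (weakToSmash 𝒜) (weakSmashSet 𝒜) (smashSet α 𝒜) ∧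
    -- ψ is k-linear
    (∀ F₁ ∈ weakSmashSet 𝒜, ∀ F₂ ∈ weakSmashSet 𝒜,
      weakToSmash 𝒜 (F₁ + F₂) = weakToSmash 𝒜 F₁ + weakToSmash 𝒜 F₂) ∧
    (∀ (c : k), ∀ F ∈ weakSmashSet 𝒜, weakToSmash 𝒜 (c • F) = c • weakToSmash 𝒜 F) ∧
    -- ψ is multiplicative
    (∀ F₁ ∈ weakSmashSet 𝒜, ∀ F₂ ∈ weakSmashSet 𝒜,
      weakToSmash 𝒜 (weakSmashMul 𝒜 F₁ F₂)
        = smashMul α (weakToSmash 𝒜 F₁) (weakToSmash 𝒜 F₂)) := by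
  have := Fintype.ofFinite G
  exact ⟨⟨weakToSmash_mapsTo 𝒜 α hα₁, (weakToSmash_injective 𝒜).injOn,
      weakToSmash_surjOn 𝒜 α hα₁⟩,
    fun F₁ _ F₂ _ => weakToSmash_add 𝒜 F₁ F₂, fun c F _ => weakToSmash_smul 𝒜 c F,
    fun _ hF₁ _ hF₂ => weakToSmash_weakSmashMul_of_mem_closure 𝒜 α hα₁ hα₂
      (weakSmashSet_subset_closure 𝒜 hF₁) (weakSmashSet_subset_closure 𝒜 hF₂)⟩

end
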